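/- arXiv:q-alg/9512002 — 4 statements merged into one kernel-verified Lean document; each statement's English description precedes it below -/
import Mathlib

section
/- Let m ≥ 3 be an integer and let r be an integer with 0 ≤ r ≤ m−3. Then t(m, r) − t(m, r+1) = t(m−1, r) in ℚ. (This is the coefficient identity that proves the STU-type relation for the element T_m of the space of trees: the difference of the coefficients of T_τ and T_{(k k+1)∘τ} in T_m equals the coefficient of the corresponding tree in T_{m−1}.) -/
/-- The coefficient `t(m, r) = (-1)^r / ((m-1) * C(m-2, r))` of the tree `T_τ`
(with `r = r(τ)` descents) in the element `T_m`. -/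
def treeCoeff (m r : ℕ) : ℚ :=
  (-1) ^ r / (((m : ℚ) - 1) * (Nat.choose (m - 2) r : ℚ))

theorem treeCoeff_sub (m r : ℕ) (hm : 3 ≤ m) (hr : r ≤ m - 3) :
    treeCoeff m r - treeCoeff m (r + 1) = treeCoeff (m - 1) r := by
  obtain ⟨k, rfl⟩ := Nat.exists_eq_add_of_le hm
  have hr' : r ≤ k := by omega
  have e1 : 3 + k - 2 = k + 1 := by omega
  have e2 : 3 + k - 1 = k + 2 := by omega
  have e3 : 3 + k - 1 - 2 = k := by omega
  simp only [treeCoeff, e1, e2, e3]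
  have h1 : ((k : ℚ) + 1) * (Nat.choose k r : ℚ) =
      (Nat.choose (k+1) (r+1) : ℚ) * ((r : ℚ) + 1) := by
    exact_mod_cast Nat.add_one_mul_choose_eq k r
  have h2 : (Nat.choose (k+1) (r+1) : ℚ) * ((r : ℚ) + 1) =
      (Nat.choose (k+1) r : ℚ) * ((k : ℚ) + 1 - r) := by
    have h2n := Nat.choose_succ_right_eq (k+1) r
    have := congrArg (Nat.cast (R := ℚ)) h2n
    push_cast [Nat.cast_sub (show r ≤ k+1 by omega)] at this
    linarith
  have c0 : (Nat.choose k r : ℚ) ≠ 0 := by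
    exact_mod_cast (Nat.choose_pos hr').ne'
  have c1 : (Nat.choose (k+1) r : ℚ) ≠ 0 := by
    exact_mod_cast (Nat.choose_pos (by omega : r ≤ k+1)).ne'
  have c2 : (Nat.choose (k+1) (r+1) : ℚ) ≠ 0 := by
    exact_mod_cast (Nat.choose_pos (by omega : r+1 ≤ k+1)).ne'
  push_cast
  have hk2 : ((3:ℚ) + k - 1) ≠ 0 :=
    ne_of_gt (by have : (0:ℚ) ≤ k := Nat.cast_nonneg k; linarith)
  have hk1 : ((k:ℚ) + 2 - 1) ≠ 0 :=
    ne_of_gt (by have : (0:ℚ) ≤ k := Nat.cast_nonneg k; linarith)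
  field_simp
  linear_combination ((-1:ℚ)^r) *
    (((Nat.choose (k+1) r : ℚ) + (Nat.choose (k+1) (r+1) : ℚ)) * h1
      + (Nat.choose (k+1) (r+1) : ℚ) * h2)
end

section
/- Let τ be a permutation of {1, …, n} and let k be an integer with 1 ≤ k ≤ n−1. If τ^{−1}(k+1) = τ^{−1}(k) + 1 (the value k+1 occurs immediately after the value k in the one-line notation of τ), then r((k k+1) ∘ τ) = r(τ) + 1, where (k k+1) denotes the transposition interchanging the values k and k+1. -/
/-- The number of descents of a function `f : Fin n → Fin n`: the number of
positions `k` (with `k + 1 < n`) such that `f k > f (k+1)`. -/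
def descNum {n : ℕ} (f : Fin n → Fin n) : ℕ :=
  ((Finset.univ : Finset (Fin n × Fin n)).filter
    (fun p => (p.2 : ℕ) = (p.1 : ℕ) + 1 ∧ f p.2 < f p.1)).card

/-- If the value `b = a + 1` occurs immediately after the value `a` in the one-line
notation of `τ`, then composing `τ` with the transposition of the values `a` and `b`
increases the number of descents by one. -/
theorem descNum_swap_of_adjacent (n : ℕ) (τ : Equiv.Perm (Fin n)) (a b : Fin n)
    (hab : (b : ℕ) = (a : ℕ) + 1)
    (hadj : (τ.symm b : ℕ) = (τ.symm a : ℕ) + 1) :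
    descNum ⇑(τ.trans (Equiv.swap a b)) = descNum ⇑τ + 1 := by
  classical
  set i := τ.symm a with hi
  set j := τ.symm b with hj
  have hia : τ i = a := τ.apply_symm_apply a
  have hjb : τ j = b := τ.apply_symm_apply b
  have hne : a ≠ b := by intro h; rw [h] at hab; omega
  have key : (Finset.univ.filter
      (fun p : Fin n × Fin n => (p.2 : ℕ) = (p.1 : ℕ) + 1 ∧
        (Equiv.swap a b) (τ p.2) < (Equiv.swap a b) (τ p.1)))
      = insert (i, j) (Finset.univ.filter
        (fun p : Fin n × Fin n => (p.2 : ℕ) = (p.1 : ℕ) + 1 ∧ τ p.2 < τ p.1)) := by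
    ext ⟨p, q⟩
    simp only [Finset.mem_filter, Finset.mem_insert, Finset.mem_univ, true_and,
      Prod.mk.injEq]
    by_cases hp : p = i
    · subst hp
      constructor
      · rintro ⟨hq, -⟩
        exact Or.inl ⟨rfl, Fin.ext (by omega)⟩
      · rintro (⟨-, hq⟩ | ⟨hq, hlt⟩)
        · subst hq
          refine ⟨hadj, ?_⟩
          rw [hia, hjb, Equiv.swap_apply_left, Equiv.swap_apply_right]
          exact Fin.lt_def.2 (by omega)
        · have hqj : q = j := Fin.ext (by omega)
          subst hqj
          rw [hia, hjb] at hlt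
          exact absurd hlt (by rw [Fin.lt_def]; omega)
    · have htpa : τ p ≠ a := fun h => hp (τ.injective (h.trans hia.symm))
      have htpa' : (τ p : ℕ) ≠ (a : ℕ) := fun h => htpa (Fin.ext h)
      have hiff : ∀ hq : (q : ℕ) = (p : ℕ) + 1,
          ((Equiv.swap a b) (τ q) < (Equiv.swap a b) (τ p) ↔ τ q < τ p) := by
        intro hq
        have hqj : q ≠ j := by
          intro h; subst h
          exact hp (Fin.ext (by omega))
        have htqb : τ q ≠ b := fun h => hqj (τ.injective (h.trans hjb.symm))
        have htqb' : (τ q : ℕ) ≠ (b : ℕ) := fun h => htqb (Fin.ext h)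
        by_cases hqa : τ q = a
        · by_cases hpb : τ p = b
          · exfalso
            have hqi : q = i := τ.injective (hqa.trans hia.symm)
            have hpj : p = j := τ.injective (hpb.trans hjb.symm)
            rw [hqi, hpj] at hq
            omega
          · have hpb' : (τ p : ℕ) ≠ (b : ℕ) := fun h => hpb (Fin.ext h)
            rw [hqa, Equiv.swap_apply_left, Equiv.swap_apply_of_ne_of_ne htpa hpb,
              Fin.lt_def, Fin.lt_def]
            omega
        · have hqa' : (τ q : ℕ) ≠ (a : ℕ) := fun h => hqa (Fin.ext h)
          by_cases hpb : τ p = b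
          · rw [hpb, Equiv.swap_apply_right, Equiv.swap_apply_of_ne_of_ne hqa htqb,
              Fin.lt_def, Fin.lt_def]
            omega
          · rw [Equiv.swap_apply_of_ne_of_ne hqa htqb,
              Equiv.swap_apply_of_ne_of_ne htpa hpb]
      constructor
      · rintro ⟨hq, hlt⟩
        exact Or.inr ⟨hq, (hiff hq).1 hlt⟩
      · rintro (⟨h1, -⟩ | ⟨hq, hlt⟩)
        · exact absurd h1 hp
        · exact ⟨hq, (hiff hq).2 hlt⟩
  have hnotmem : (i, j) ∉ (Finset.univ.filter
      (fun p : Fin n × Fin n => (p.2 : ℕ) = (p.1 : ℕ) + 1 ∧ τ p.2 < τ p.1)) := by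
    simp only [Finset.mem_filter, Finset.mem_univ, true_and, not_and]
    intro _
    rw [hia, hjb, Fin.lt_def]
    omega
  simp only [descNum, Equiv.trans_apply]
  rw [← Finset.card_insert_of_notMem hnotmem, ← key]
  rfl
end

section
/- Let n ≥ 2, let τ be a permutation of {1, …, n}, and let k with 1 ≤ k ≤ n−1 be such that the value k+1 occurs immediately after the value k in the one-line notation of τ. Let the sequence obtained from the one-line notation of τ by deleting the entry k+1 and replacing every entry j with j > k+1 by j−1 be the one-line notation of a map τ̂ on {1, …, n−1}. Then τ̂ is a permutation of {1, …, n−1} and r(τ̂) = r(τ). (This contraction, which glues two adjacent legs of a tree, preserves the descent number; it is used in the proofs of Lemma 2.2 and Lemma 2.5.) -/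
lemma descNum_eq_range {m : ℕ} (g : Fin m → Fin m) :
    descNum g = ((Finset.range (m-1)).filter
      (fun k => (if h : k+1 < m then ((g ⟨k+1,h⟩ : ℕ)) else 0) <
                (if h : k < m then ((g ⟨k,h⟩ : ℕ)) else 0))).card := by
  unfold descNum
  apply Finset.card_bij (fun p _ => ((p.1 : Fin m) : ℕ))
  · intro p hp
    simp only [Finset.mem_filter, Finset.mem_univ, true_and] at hp
    obtain ⟨h1, h2⟩ := hp
    have hp2 := p.2.isLt
    simp only [Finset.mem_filter, Finset.mem_range]
    refine ⟨by omega, ?_⟩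
    rw [dif_pos (show (p.1:ℕ)+1 < m by omega), dif_pos p.1.isLt]
    have e2 : (⟨(p.1:ℕ)+1, by omega⟩ : Fin m) = p.2 := Fin.ext h1.symm
    have e1 : (⟨(p.1:ℕ), p.1.isLt⟩ : Fin m) = p.1 := Fin.ext rfl
    rw [e1, e2]
    exact h2
  · intro p1 h1 p2 h2 he
    simp only [Finset.mem_filter, Finset.mem_univ, true_and] at h1 h2
    have h22 : (p1.2 : ℕ) = (p2.2 : ℕ) := by omega
    exact Prod.ext (Fin.ext he) (Fin.ext h22)
  · intro k hk
    simp only [Finset.mem_filter, Finset.mem_range] at hk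
    obtain ⟨hk1, hk2⟩ := hk
    have hkm : k + 1 < m := by omega
    rw [dif_pos hkm, dif_pos (show k < m by omega)] at hk2
    exact ⟨(⟨k, by omega⟩, ⟨k+1, hkm⟩), Finset.mem_filter.mpr
      ⟨Finset.mem_univ _, rfl, Fin.lt_def.mpr hk2⟩, rfl⟩

lemma shrink_inj (b u v : ℕ) (hu : u ≠ b) (hv : v ≠ b)
    (h : (if b < u then u-1 else u) = (if b < v then v-1 else v)) : u = v := by
  split_ifs at h <;> omega

lemma card_aux (n P b : ℕ) (G Ff : ℕ → ℕ)
    (hPn : P + 1 < n)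
    (hGinj : ∀ j1 j2, j1 < n → j2 < n → G j1 = G j2 → j1 = j2)
    (hGP : G P + 1 = b) (hGP1 : G (P+1) = b)
    (key : ∀ k, k < n-1 →
      Ff k = (if b < G (if k < P+1 then k else k+1) then
        G (if k < P+1 then k else k+1) - 1 else G (if k < P+1 then k else k+1))) :
    ((Finset.range (n-1-1)).filter (fun k => Ff (k+1) < Ff k)).card
      = ((Finset.range (n-1)).filter (fun k => G (k+1) < G k)).card := by
  have hGneb : ∀ j, j < n → j ≠ P + 1 → G j ≠ b := by
    intro j hj hne hb
    exact hne (hGinj j (P+1) hj hPn (hb.trans hGP1.symm))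
  have hiff : ∀ k, k < n-1-1 →
      (Ff (k+1) < Ff k ↔
        G ((if k < P then k else k+1) + 1) < G (if k < P then k else k+1)) := by
    intro k hk
    rw [key k (by omega), key (k+1) (by omega)]
    rcases lt_trichotomy k P with h | h | h
    · have e1 : (if k < P+1 then k else k+1) = k := if_pos (by omega)
      have e2 : (if k+1 < P+1 then k+1 else k+1+1) = k+1 := if_pos (by omega)
      have e3 : (if k < P then k else k+1) = k := if_pos h
      rw [e1, e2, e3]
      have hb1 : G k ≠ b := hGneb k (by omega) (by omega)
      have hb2 : G (k+1) ≠ b := hGneb (k+1) (by omega) (by omega)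
      split_ifs <;> omega
    · subst h
      have e1 : (if k < k+1 then k else k+1) = k := if_pos (by omega)
      have e2 : (if k+1 < k+1 then k+1 else k+1+1) = k+1+1 := if_neg (by omega)
      have e3 : (if k < k then k else k+1) = k+1 := if_neg (by omega)
      rw [e1, e2, e3, hGP1]
      have hb2 : G (k+1+1) ≠ b := hGneb (k+1+1) (by omega) (by omega)
      have hne : G (k+1+1) ≠ G k := fun hh => by
        have := hGinj (k+1+1) k (by omega) (by omega) hh; omega
      split_ifs <;> omega
    · have e1 : (if k < P+1 then k else k+1) = k+1 := if_neg (by omega)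
      have e2 : (if k+1 < P+1 then k+1 else k+1+1) = k+1+1 := if_neg (by omega)
      have e3 : (if k < P then k else k+1) = k+1 := if_neg (by omega)
      rw [e1, e2, e3]
      have hb1 : G (k+1) ≠ b := hGneb (k+1) (by omega) (by omega)
      have hb2 : G (k+1+1) ≠ b := hGneb (k+1+1) (by omega) (by omega)
      split_ifs <;> omega
  apply Finset.card_bij (fun k _ => if k < P then k else k + 1)
  · intro k hk
    simp only [Finset.mem_filter, Finset.mem_range] at hk ⊢
    obtain ⟨hk1, hk2⟩ := hk
    exact ⟨by split_ifs <;> omega, (hiff k hk1).mp hk2⟩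
  · intro k1 h1 k2 h2 he
    split_ifs at he <;> omega
  · intro K hK
    simp only [Finset.mem_filter, Finset.mem_range] at hK
    obtain ⟨hK1, hK2⟩ := hK
    have hKP : K ≠ P := by
      intro h; subst h; omega
    rcases lt_or_gt_of_ne hKP with h | h
    · refine ⟨K, ?_, if_pos h⟩
      simp only [Finset.mem_filter, Finset.mem_range]
      refine ⟨by omega, (hiff K (by omega)).mpr ?_⟩
      rw [if_pos h]; exact hK2
    · refine ⟨K-1, ?_, ?_⟩
      · simp only [Finset.mem_filter, Finset.mem_range]
        refine ⟨by omega, (hiff (K-1) (by omega)).mpr ?_⟩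
        rw [if_neg (by omega)]
        have : K - 1 + 1 = K := by omega
        rw [this]; exact hK2
      · rw [if_neg (by omega)]; omega

/-- Let `τ` be a permutation in which the value `b = a + 1` occurs immediately after the
value `a` in one-line notation.  Deleting the entry `b` from the one-line notation of `τ`
and decreasing by one every entry larger than `b` yields the one-line notation of a map
`f` on a set with one element fewer; then `f` is a permutation whose number of descents
equals that of `τ`. -/
theorem contraction_bijective_and_descNum_eq (n : ℕ) (hn : 2 ≤ n)
    (τ : Equiv.Perm (Fin n)) (a b : Fin n)
    (hab : (b : ℕ) = (a : ℕ) + 1)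
    (hadj : (τ.symm b : ℕ) = (τ.symm a : ℕ) + 1)
    (f : Fin (n - 1) → Fin (n - 1))
    (hf : ∀ (i : Fin (n - 1)) (i' : Fin n),
      (i' : ℕ) = (if (i : ℕ) < (τ.symm b : ℕ) then (i : ℕ) else (i : ℕ) + 1) →
      (f i : ℕ) = if (b : ℕ) < (τ i' : ℕ) then (τ i' : ℕ) - 1 else (τ i' : ℕ)) :
    Function.Bijective f ∧ descNum f = descNum ⇑τ := by
  set P : ℕ := (τ.symm a : ℕ) with hPdef
  have hPb : (τ.symm b : ℕ) = P + 1 := hadj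
  have hPn : P + 1 < n := hPb ▸ (τ.symm b).isLt
  set G : ℕ → ℕ := fun k => if h : k < n then ((τ ⟨k,h⟩ : ℕ)) else 0 with hGdef
  set Ff : ℕ → ℕ := fun k => if h : k < n-1 then ((f ⟨k,h⟩ : ℕ)) else 0 with hFfdef
  have hGval : ∀ j (hj : j < n), G j = (τ ⟨j, hj⟩ : ℕ) := by
    intro j hj; simp [hGdef, dif_pos hj]
  have hGP : G P + 1 = (b : ℕ) := by
    rw [hGval P (by omega)]
    have e : (⟨P, by omega⟩ : Fin n) = τ.symm a := Fin.ext rfl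
    rw [e, Equiv.apply_symm_apply]
    omega
  have hGP1 : G (P+1) = (b : ℕ) := by
    rw [hGval (P+1) hPn]
    have e : (⟨P+1, hPn⟩ : Fin n) = τ.symm b := Fin.ext hPb.symm
    rw [e, Equiv.apply_symm_apply]
  have hGinj : ∀ j1 j2, j1 < n → j2 < n → G j1 = G j2 → j1 = j2 := by
    intro j1 j2 h1 h2 he
    rw [hGval j1 h1, hGval j2 h2] at he
    have := τ.injective (Fin.ext he)
    simpa using congrArg Fin.val this
  have key : ∀ k, k < n-1 →
      Ff k = (if (b:ℕ) < G (if k < P+1 then k else k+1) then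
        G (if k < P+1 then k else k+1) - 1 else G (if k < P+1 then k else k+1)) := by
    intro k hk
    have hσ : (if k < P+1 then k else k+1) < n := by split_ifs <;> omega
    have hcond : ((⟨if k < P+1 then k else k+1, hσ⟩ : Fin n) : ℕ)
        = if ((⟨k, hk⟩ : Fin (n-1)) : ℕ) < (τ.symm b : ℕ) then ((⟨k, hk⟩ : Fin (n-1)) : ℕ)
          else ((⟨k, hk⟩ : Fin (n-1)) : ℕ) + 1 := by
      simp only [hPb]
    have := hf ⟨k, hk⟩ ⟨if k < P+1 then k else k+1, hσ⟩ hcond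
    rw [hGval _ hσ]
    simpa [hFfdef, dif_pos hk] using this
  have hinj : Function.Injective f := by
    intro i j hij
    have hFi : Ff (i : ℕ) = (f i : ℕ) := by
      simp [hFfdef, dif_pos i.isLt]
    have hFj : Ff (j : ℕ) = (f j : ℕ) := by
      simp [hFfdef, dif_pos j.isLt]
    have hval : Ff (i : ℕ) = Ff (j : ℕ) := by rw [hFi, hFj, hij]
    rw [key (i:ℕ) i.isLt, key (j:ℕ) j.isLt] at hval
    have hσi : (if (i:ℕ) < P+1 then (i:ℕ) else (i:ℕ)+1) < n := by
      have := i.isLt; split_ifs <;> omega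
    have hσj : (if (j:ℕ) < P+1 then (j:ℕ) else (j:ℕ)+1) < n := by
      have := j.isLt; split_ifs <;> omega
    have hbi : G (if (i:ℕ) < P+1 then (i:ℕ) else (i:ℕ)+1) ≠ (b:ℕ) := by
      intro hh
      have := hGinj _ (P+1) hσi hPn (hh.trans hGP1.symm)
      split_ifs at this <;> omega
    have hbj : G (if (j:ℕ) < P+1 then (j:ℕ) else (j:ℕ)+1) ≠ (b:ℕ) := by
      intro hh
      have := hGinj _ (P+1) hσj hPn (hh.trans hGP1.symm)
      split_ifs at this <;> omega
    have hGeq : G (if (i:ℕ) < P+1 then (i:ℕ) else (i:ℕ)+1)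
        = G (if (j:ℕ) < P+1 then (j:ℕ) else (j:ℕ)+1) :=
      shrink_inj (b:ℕ) _ _ hbi hbj hval
    have := hGinj _ _ hσi hσj hGeq
    have : (i : ℕ) = (j : ℕ) := by split_ifs at this <;> omega
    exact Fin.ext this
  refine ⟨Finite.injective_iff_bijective.mp hinj, ?_⟩
  rw [descNum_eq_range f, descNum_eq_range ⇑τ]
  exact card_aux n P (b:ℕ) G Ff hPn hGinj hGP hGP1 key
end

section
/- Let n ≥ 1 and let π be a permutation of {1, …, n}. In the algebra of (n+2)×(n+2) complex matrices, let E_{a,b} denote the matrix unit with (a,b) entry 1 and all other entries 0, and let [A, B] = AB − BA. Define X_0 = E_{1,2} and X_j = [X_{j−1}, E_{π(j)+1, π(j)+2}] for 1 ≤ j ≤ n. Then X_n = E_{1,n+2} if π is the identity permutation, and X_n = 0 otherwise. (This computation with matrix units in sl(m, ℂ) is the substitution argument proving that the trees T_τ, τ ∈ S_{m−2}, are linearly independent in the space of trees, so that they form a basis of dimension (m−2)!.) -/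
open Fin.NatCast

/-- Iterated commutators of matrix units in `sl(n+2, ℂ)`, as prescribed by a permutation
`π` of `{1, …, n}` (here realized as `Equiv.Perm (Fin n)` with `0`-indexed values):
starting from `X 0 = E_{1,2}` and bracketing successively with
`E_{π(j)+1, π(j)+2}`, the result is `E_{1,n+2}` when `π` is the identity and `0`
otherwise. -/
theorem iterated_bracket_matrix_units (n : ℕ) (hn : 1 ≤ n) (π : Equiv.Perm (Fin n))
    (E : Fin (n + 2) → Fin (n + 2) → Matrix (Fin (n + 2)) (Fin (n + 2)) ℂ)
    (hE : ∀ a b, E a b = Matrix.single a b 1)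
    (X : ℕ → Matrix (Fin (n + 2)) (Fin (n + 2)) ℂ)
    (hX0 : X 0 = E 0 1)
    (hX : ∀ j : Fin n, X ((j : ℕ) + 1) =
      X (j : ℕ) * E (((π j : ℕ) + 1 : ℕ) : Fin (n + 2)) (((π j : ℕ) + 2 : ℕ) : Fin (n + 2)) -
      E (((π j : ℕ) + 1 : ℕ) : Fin (n + 2)) (((π j : ℕ) + 2 : ℕ) : Fin (n + 2)) * X (j : ℕ)) :
    X n = if π = 1 then E 0 (((n + 1 : ℕ) : Fin (n + 2))) else 0 := by
  have key : ∀ k : ℕ, k ≤ n →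
      X k = if (∀ j : Fin n, (j : ℕ) < k → π j = j)
        then Matrix.single 0 (((k + 1 : ℕ) : Fin (n + 2))) 1 else 0 := by
    intro k
    induction k with
    | zero =>
      intro _
      rw [hX0, hE, if_pos]
      · norm_num
      · intro j hj; omega
    | succ k ih =>
      intro hk1
      have hk : k < n := hk1
      have hXk := ih hk.le
      have hstep := hX ⟨k, hk⟩
      simp only [Fin.val_mk] at hstep
      set p : ℕ := (π ⟨k, hk⟩ : ℕ) with hp
      have hplt : p < n := (π ⟨k, hk⟩).isLt
      have hv1 : (((p + 1 : ℕ)) : Fin (n + 2)).val = p + 1 := Fin.val_cast_of_lt (by omega)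
      have hv2 : (((p + 2 : ℕ)) : Fin (n + 2)).val = p + 2 := Fin.val_cast_of_lt (by omega)
      have hvk : (((k + 1 : ℕ)) : Fin (n + 2)).val = k + 1 := Fin.val_cast_of_lt (by omega)
      rw [hE] at hstep
      by_cases hcond : ∀ j : Fin n, (j : ℕ) < k → π j = j
      · rw [if_pos hcond] at hXk
        by_cases hpk : p = k
        · -- the product survives
          have hfe : ((k + 1 : ℕ) : Fin (n + 2)) = ((p + 1 : ℕ) : Fin (n + 2)) := by
            rw [hpk]
          have hne2 : ((p + 2 : ℕ) : Fin (n + 2)) ≠ (0 : Fin (n + 2)) := by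
            intro hcontr
            have := congrArg Fin.val hcontr
            rw [hv2] at this
            simp at this
          rw [hstep, hXk, hfe, Matrix.single_mul_single_same,
            Matrix.single_mul_single_of_ne (h := hne2), if_pos]
          · simp [hpk, add_assoc]
          · intro j hj
            rcases Nat.lt_succ_iff_lt_or_eq.mp hj with h | h
            · exact hcond j h
            · have : j = ⟨k, hk⟩ := Fin.ext h
              subst this
              exact Fin.ext hpk
        · -- mismatch kills everything
          have hne1 : ((k + 1 : ℕ) : Fin (n + 2)) ≠ ((p + 1 : ℕ) : Fin (n + 2)) := by
            intro hcontr
            have := congrArg Fin.val hcontr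
            rw [hvk, hv1] at this
            omega
          have hne2 : ((p + 2 : ℕ) : Fin (n + 2)) ≠ (0 : Fin (n + 2)) := by
            intro hcontr
            have := congrArg Fin.val hcontr
            rw [hv2] at this
            simp at this
          rw [hstep, hXk, Matrix.single_mul_single_of_ne (h := hne1),
            Matrix.single_mul_single_of_ne (h := hne2), if_neg]
          · simp
          · intro hcontr
            exact hpk (congrArg Fin.val (hcontr ⟨k, hk⟩ (Nat.lt_succ_self k)))
      · -- X k = 0 already
        rw [if_neg hcond] at hXk
        rw [hstep, hXk, if_neg]
        · simp
        · intro hcontr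
          exact hcond fun j hj => hcontr j (Nat.lt_succ_of_lt hj)
  rw [key n le_rfl, hE]
  congr 1
  · simp only [eq_iff_iff]
    constructor
    · intro h
      ext j
      exact congrArg Fin.val (h j j.isLt)
    · intro h j _
      rw [h]; rfl
end
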